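/- arXiv:2604.25873 — 4 statements merged into one kernel-verified Lean document; each statement's English description precedes it below -/
import Mathlib

section
/- Let w ∈ A_p for some 1 < p < ∞ and let σ = w^{1-p'} be the dual weight (p' the Hölder conjugate of p). Set ε = (p-1)/(2^{n+1}([σ]_{A_∞} - 1) + 1). Then w ∈ A_{p-ε} with [w]_{A_{p-ε}} ≤ (2[σ]_{A_∞})^{p-1} [w]_{A_p}. -/
open MeasureTheory Real

noncomputable section

/-- `Rn n` is Euclidean space `ℝⁿ` with the sup metric, so that closed balls are cubes. -/
abbrev Rn (n : ℕ) := Fin n → ℝ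

/-- An (axis-parallel, closed) cube in `ℝⁿ`: a closed ball for the sup metric with
positive radius. -/
def IsCube {n : ℕ} (Q : Set (Rn n)) : Prop :=
  ∃ (c : Rn n) (r : ℝ), 0 < r ∧ Q = Metric.closedBall c r

/-- Lebesgue measure `|Q|` as a real number. -/
def vol {n : ℕ} (Q : Set (Rn n)) : ℝ := (volume Q).toReal

/-- `w(Q) = ∫_Q w`. -/
def intOn {n : ℕ} (w : Rn n → ℝ) (Q : Set (Rn n)) : ℝ := ∫ x in Q, w x

/-- Lebesgue average `(1/|Q|) ∫_Q f`. -/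
def avgOn {n : ℕ} (Q : Set (Rn n)) (f : Rn n → ℝ) : ℝ := (vol Q)⁻¹ * ∫ x in Q, f x

/-- Weighted average `f_{Q,w} = (1/w(Q)) ∫_Q f w`. -/
def wavgOn {n : ℕ} (w : Rn n → ℝ) (Q : Set (Rn n)) (f : Rn n → ℝ) : ℝ :=
  (intOn w Q)⁻¹ * ∫ x in Q, f x * w x

/-- Hardy–Littlewood maximal function over cubes. -/
def maximalFn {n : ℕ} (f : Rn n → ℝ) (x : Rn n) : ℝ :=
  sSup {a | ∃ Q : Set (Rn n), IsCube Q ∧ x ∈ Q ∧ a = avgOn Q (fun y => |f y|)}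

/-- The set of ratios defining the Fujii–Wilson `A_∞` constant. -/
def fwSet {n : ℕ} (w : Rn n → ℝ) : Set ℝ :=
  {a | ∃ Q : Set (Rn n), IsCube Q ∧
    a = (intOn w Q)⁻¹ * ∫ x in Q, maximalFn (Q.indicator w) x}

/-- Fujii–Wilson constant `[w]_{A_∞} = sup_Q (1/w(Q)) ∫_Q M(w χ_Q)`. -/
def fujiiWilson {n : ℕ} (w : Rn n → ℝ) : ℝ := sSup (fwSet w)

open Classical in
/-- The `A_p` ratio of `w` on the cube `Q`:
`((1/|Q|)∫_Q w)((1/|Q|)∫_Q w^{1-p'})^{p-1}` for `p > 1` (note `1 - p' = -1/(p-1)`),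
with the ess-sup convention for `p = 1`. -/
def apRatio {n : ℕ} (p : ℝ) (w : Rn n → ℝ) (Q : Set (Rn n)) : ℝ :=
  if p = 1 then
    avgOn Q w * essSup (fun x => (w x)⁻¹) (volume.restrict Q)
  else
    avgOn Q w * (avgOn Q (fun x => w x ^ (-(p - 1)⁻¹))) ^ (p - 1)

/-- The set of `A_p` ratios of `w` over all cubes. -/
def apSet {n : ℕ} (p : ℝ) (w : Rn n → ℝ) : Set ℝ :=
  {a | ∃ Q : Set (Rn n), IsCube Q ∧ a = apRatio p w Q}

/-- The Muckenhoupt `A_p` constant `[w]_{A_p}`. -/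
def apConst {n : ℕ} (p : ℝ) (w : Rn n → ℝ) : ℝ := sSup (apSet p w)

/-- The set of ratios defining the Hruščev `A_∞` constant. -/
def hruscevSet {n : ℕ} (w : Rn n → ℝ) : Set ℝ :=
  {a | ∃ Q : Set (Rn n), IsCube Q ∧
    a = avgOn Q w * Real.exp (avgOn Q (fun x => Real.log (w x)⁻¹))}

/-- Hruščev constant `[w]'_{A_∞} = sup_Q ((1/|Q|)∫_Q w) exp((1/|Q|)∫_Q log w⁻¹)`. -/
def hruscev {n : ℕ} (w : Rn n → ℝ) : ℝ := sSup (hruscevSet w)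

/-- The set of ratios defining the logarithmic `A_∞` constant. -/
def logAinfSet {n : ℕ} (w : Rn n → ℝ) : Set ℝ :=
  {a | ∃ Q : Set (Rn n), IsCube Q ∧
    a = (intOn w Q)⁻¹ * ∫ x in Q, (1 + max (Real.log (w x / avgOn Q w)) 0) * w x}

/-- Logarithmic `A_∞` constant
`[w]_{A_∞}^{log} = sup_Q (1/w(Q)) ∫_Q (1 + log⁺(w/w_Q)) w`. -/
def logAinf {n : ℕ} (w : Rn n → ℝ) : ℝ := sSup (logAinfSet w)

/-- The set of mean oscillations of `f` over cubes. -/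
def bmoSet {n : ℕ} (f : Rn n → ℝ) : Set ℝ :=
  {a | ∃ Q : Set (Rn n), IsCube Q ∧ a = avgOn Q (fun x => |f x - avgOn Q f|)}

/-- The `BMO` seminorm `‖f‖_{BMO} = sup_Q (1/|Q|) ∫_Q |f - f_Q|`. -/
def bmoNorm {n : ℕ} (f : Rn n → ℝ) : ℝ := sSup (bmoSet f)

/-- The set of weighted mean oscillations of `f` over cubes. -/
def bmoWSet {n : ℕ} (w f : Rn n → ℝ) : Set ℝ :=
  {a | ∃ Q : Set (Rn n), IsCube Q ∧
    a = (intOn w Q)⁻¹ * ∫ x in Q, |f x - wavgOn w Q f| * w x}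

/-- The weighted `BMO` seminorm `‖f‖_{BMO_w} = sup_Q (1/w(Q)) ∫_Q |f - f_{Q,w}| w`. -/
def bmoWNorm {n : ℕ} (w f : Rn n → ℝ) : ℝ := sSup (bmoWSet w f)

/-!
If `[σ]_{A_∞} > 1`, write `K = 2^(n+1)([σ]_{A_∞} - 1)`, so that `ε = (p-1)/(K+1)` and
`w^(-1/(p-ε-1)) = σ^(1+1/K)`. The reverse Hölder inequality with `δ = 1/K` then gives
`⟨σ^(1+δ)⟩_Q^(p-ε-1) ≤ (2[σ]_{A_∞})^(p-ε-1) ⟨σ⟩_Q^(p-1)`, which is the bound on the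
`A_(p-ε)` ratio.

If `[σ]_{A_∞} = 1`, then `ε = p - 1` and the `A_1` ratio has to be bounded. On a subcube `P ⊆ Q`
one has `M(σ χ_Q) ≥ ⟨σ⟩_P`, and on `Q` one has `M(σ χ_Q) ≥ ⟨σ⟩_Q`; together with
`∫_Q M(σ χ_Q) ≤ σ(Q)` this forces `⟨σ⟩_P ≤ ⟨σ⟩_Q`. By Lebesgue differentiation `σ ≤ ⟨σ⟩_Q` a.e.
on `Q`, that is `w⁻¹ ≤ ⟨σ⟩_Q^(p-1)`, so the `A_1` ratio is at most the `A_p` ratio.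
-/

open Metric Filter Topology Set

variable {n : ℕ}

lemma vol_closedBall (c : Rn n) {r : ℝ} (hr : 0 ≤ r) : vol (closedBall c r) = (2 * r) ^ n := by
  rw [vol, Real.volume_pi_closedBall c hr, Fintype.card_fin, ENNReal.toReal_ofReal (by positivity)]

namespace IsCube

variable {Q : Set (Rn n)}

lemma measurableSet (hQ : IsCube Q) : MeasurableSet Q := by
  obtain ⟨c, r, -, rfl⟩ := hQ
  exact measurableSet_closedBall

lemma isCompact (hQ : IsCube Q) : IsCompact Q := by
  obtain ⟨c, r, -, rfl⟩ := hQ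
  exact isCompact_closedBall c r

lemma volume_ne_top (hQ : IsCube Q) : volume Q ≠ ⊤ :=
  hQ.isCompact.measure_ne_top

lemma vol_pos (hQ : IsCube Q) : 0 < vol Q := by
  obtain ⟨c, r, hr, rfl⟩ := hQ
  rw [vol_closedBall c hr.le]
  positivity

lemma volume_ne_zero (hQ : IsCube Q) : volume Q ≠ 0 :=
  fun h => hQ.vol_pos.ne' (by rw [vol, h, ENNReal.toReal_zero])

lemma integrableOn {f : Rn n → ℝ} (hQ : IsCube Q) (hf : LocallyIntegrable f volume) :
    IntegrableOn f Q volume :=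
  hf.integrableOn_isCompact hQ.isCompact

end IsCube

lemma setAverage_eq_avgOn (Q : Set (Rn n)) (f : Rn n → ℝ) : ⨍ x in Q, f x = avgOn Q f := by
  rw [setAverage_eq, smul_eq_mul]
  rfl

lemma avgOn_nonneg {Q : Set (Rn n)} {f : Rn n → ℝ} (hf : ∀ x, 0 ≤ f x) : 0 ≤ avgOn Q f :=
  mul_nonneg (inv_nonneg.mpr ENNReal.toReal_nonneg) (integral_nonneg hf)

lemma vol_mul_avgOn {Q : Set (Rn n)} (hQ : IsCube Q) (f : Rn n → ℝ) :
    vol Q * avgOn Q f = ∫ x in Q, f x := by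
  rw [avgOn, mul_inv_cancel_left₀ hQ.vol_pos.ne']

lemma avgOn_le_of_ae_le {Q : Set (Rn n)} (hQ : IsCube Q) {f : Rn n → ℝ} {C : ℝ}
    (hf : IntegrableOn f Q volume) (h : ∀ᵐ x ∂volume.restrict Q, f x ≤ C) : avgOn Q f ≤ C := by
  have hint : vol Q * avgOn Q f ≤ vol Q * C := by
    rw [vol_mul_avgOn hQ]
    calc ∫ x in Q, f x ≤ ∫ _ in Q, C := integral_mono_ae hf (integrableOn_const hQ.volume_ne_top) h
      _ = vol Q * C := by rw [setIntegral_const, smul_eq_mul]; rfl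
  exact le_of_mul_le_mul_left hint hQ.vol_pos

lemma avgOn_closedBall_le_pow_mul {g : Rn n → ℝ} (hg0 : ∀ x, 0 ≤ g x) (c : Rn n) {r θ : ℝ}
    (hr : 0 < r) (hθ : 1 ≤ θ) (hg : IntegrableOn g (closedBall c (θ * r)) volume) :
    avgOn (closedBall c r) g ≤ θ ^ n * avgOn (closedBall c (θ * r)) g := by
  have hsub : closedBall c r ⊆ closedBall c (θ * r) :=
    closedBall_subset_closedBall (le_mul_of_one_le_left hr.le hθ)
  have hvol : θ ^ n * ((2 * (θ * r)) ^ n)⁻¹ = ((2 * r) ^ n)⁻¹ := by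
    have : θ ≠ 0 := by positivity
    field_simp
    ring
  rw [avgOn, avgOn, vol_closedBall c hr.le, vol_closedBall c (by positivity), ← mul_assoc, hvol]
  exact mul_le_mul_of_nonneg_left (setIntegral_mono_set hg (ae_of_all _ hg0) hsub.eventuallyLE)
    (by positivity)

section MaximalFunction

lemma maximalFn_nonneg (f : Rn n → ℝ) (x : Rn n) : 0 ≤ maximalFn f x :=
  Real.sSup_nonneg (by rintro a ⟨Q, -, -, rfl⟩; exact avgOn_nonneg fun y => abs_nonneg (f y))

variable {f : Rn n → ℝ} {S : ℝ} (hf : LocallyIntegrable f volume) (hfS : ∀ᵐ x, |f x| ≤ S)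
include hf hfS

lemma avgOn_abs_le {Q : Set (Rn n)} (hQ : IsCube Q) : avgOn Q (fun y => |f y|) ≤ S :=
  avgOn_le_of_ae_le hQ (hQ.integrableOn hf).abs (ae_restrict_of_ae hfS)

lemma avgOn_abs_le_maximalFn {Q : Set (Rn n)} {x : Rn n} (hQ : IsCube Q) (hx : x ∈ Q) :
    avgOn Q (fun y => |f y|) ≤ maximalFn f x :=
  le_csSup ⟨S, by rintro a ⟨P, hP, -, rfl⟩; exact avgOn_abs_le hf hfS hP⟩ ⟨Q, hQ, hx, rfl⟩

lemma maximalFn_le (x : Rn n) : maximalFn f x ≤ S :=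
  csSup_le ⟨_, closedBall x 1, ⟨x, 1, one_pos, rfl⟩, mem_closedBall_self zero_le_one, rfl⟩
    (by rintro a ⟨P, hP, -, rfl⟩; exact avgOn_abs_le hf hfS hP)

/-- A cube `Q ∋ x` with large average is swallowed, for `y` near `x`, by a slightly dilated
concentric cube containing `y`, whose average is almost as large. -/
lemma lowerSemicontinuous_maximalFn : LowerSemicontinuous (maximalFn f) := by
  intro x t ht
  obtain ⟨a, ⟨Q, ⟨c, r, hr, rfl⟩, hxQ, rfl⟩, hta⟩ :=
    exists_lt_of_lt_csSup (by exact ⟨_, closedBall x 1, ⟨x, 1, one_pos, rfl⟩,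
      mem_closedBall_self zero_le_one, rfl⟩) ht
  have hdilate : ∀ᶠ θ in 𝓝[>] (1 : ℝ), θ ^ n * t < avgOn (closedBall c r) (fun y => |f y|) := by
    have hcont : Continuous fun θ : ℝ => θ ^ n * t := by fun_prop
    exact nhdsWithin_le_nhds ((hcont.tendsto' 1 t (by simp)).eventually (gt_mem_nhds hta))
  obtain ⟨θ, hθt, hθ1⟩ := (hdilate.and self_mem_nhdsWithin).exists
  have hθ1 : 1 < θ := hθ1
  filter_upwards [ball_mem_nhds x (mul_pos (sub_pos.2 hθ1) hr)] with y hy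
  have hyQ : y ∈ closedBall c (θ * r) := by
    rw [mem_ball] at hy
    rw [mem_closedBall] at hxQ ⊢
    linarith [dist_triangle y x c]
  have hθQ : IsCube (closedBall c (θ * r)) := ⟨c, θ * r, by positivity, rfl⟩
  have hpow : 0 < θ ^ n := by positivity
  refine lt_of_mul_lt_mul_left ?_ hpow.le
  calc θ ^ n * t < avgOn (closedBall c r) (fun y => |f y|) := hθt
    _ ≤ θ ^ n * avgOn (closedBall c (θ * r)) (fun y => |f y|) :=
      avgOn_closedBall_le_pow_mul (fun y => abs_nonneg (f y)) c hr hθ1.le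
        (hθQ.integrableOn hf).abs
    _ ≤ θ ^ n * maximalFn f y := by gcongr; exact avgOn_abs_le_maximalFn hf hfS hθQ hyQ

lemma integrableOn_maximalFn {Q : Set (Rn n)} (hQ : IsCube Q) :
    IntegrableOn (maximalFn f) Q volume :=
  Measure.integrableOn_of_bounded hQ.volume_ne_top
    (lowerSemicontinuous_maximalFn hf hfS).measurable.aestronglyMeasurable
    (ae_of_all _ fun x => by
      rw [Real.norm_eq_abs, abs_of_nonneg (maximalFn_nonneg f x)]
      exact maximalFn_le hf hfS x)

end MaximalFunction

lemma avgOn_le_avgOn_of_fujiiWilson_le_one {σ : Rn n → ℝ} (hσ0 : ∀ x, 0 ≤ σ x)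
    (hσl : LocallyIntegrable σ volume) (hfw : BddAbove (fwSet σ)) (hF : fujiiWilson σ ≤ 1)
    {Q : Set (Rn n)} (hQ : IsCube Q) (hσQ : 0 < intOn σ Q) {S : ℝ}
    (hS : ∀ᵐ x ∂volume.restrict Q, σ x ≤ S) {P : Set (Rn n)} (hP : IsCube P) (hPQ : P ⊆ Q) :
    avgOn P σ ≤ avgOn Q σ := by
  set g := Q.indicator σ
  have hg : LocallyIntegrable g volume := hσl.indicator hQ.measurableSet
  have hgS : ∀ᵐ x, |g x| ≤ max S 0 := by
    filter_upwards [(ae_restrict_iff' hQ.measurableSet).1 hS] with x hx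
    rw [abs_of_nonneg (indicator_nonneg (fun y _ => hσ0 y) x)]
    exact indicator_apply_le' (fun h => (hx h).trans (le_max_left _ _))
      (fun _ => le_max_right _ _)
  have hgavg : ∀ R, IsCube R → R ⊆ Q → avgOn R (fun y => |g y|) = avgOn R σ := by
    intro R hR hRQ
    simp only [avgOn]
    congr 1
    refine setIntegral_congr_fun hR.measurableSet fun x hx => ?_
    simp only [g, indicator_of_mem (hRQ hx), abs_of_nonneg (hσ0 x)]
  have hM := integrableOn_maximalFn hg hgS hQ
  have hupper : ∫ x in Q, maximalFn g x ≤ vol Q * avgOn Q σ := by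
    have h1 : (intOn σ Q)⁻¹ * ∫ x in Q, maximalFn g x ≤ 1 := (le_csSup hfw ⟨Q, hQ, rfl⟩).trans hF
    rw [vol_mul_avgOn hQ]
    rwa [inv_mul_le_iff₀ hσQ, mul_one] at h1
  have hlowerP : avgOn P σ * vol P ≤ ∫ x in P, maximalFn g x :=
    setIntegral_ge_of_const_le_real hP.measurableSet hP.volume_ne_top
      (fun x hx => hgavg P hP hPQ ▸ avgOn_abs_le_maximalFn hg hgS hP hx) (hM.mono_set hPQ)
  have hlowerQP : avgOn Q σ * (vol Q - vol P) ≤ ∫ x in Q \ P, maximalFn g x := by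
    have h := setIntegral_ge_of_const_le_real (hQ.measurableSet.diff hP.measurableSet)
      (measure_ne_top_of_subset sdiff_subset hQ.volume_ne_top)
      (fun x hx => hgavg Q hQ subset_rfl ▸ avgOn_abs_le_maximalFn hg hgS hQ hx.1)
      (hM.mono_set sdiff_subset)
    rwa [measureReal_sdiff hPQ hP.measurableSet hQ.volume_ne_top] at h
  have hsplit : ∫ x in Q, maximalFn g x
      = (∫ x in P, maximalFn g x) + ∫ x in Q \ P, maximalFn g x := by
    rw [← setIntegral_union disjoint_sdiff_right (hQ.measurableSet.diff hP.measurableSet)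
      (hM.mono_set hPQ) (hM.mono_set sdiff_subset), union_sdiff_cancel hPQ]
  have hP' : avgOn P σ * vol P ≤ avgOn Q σ * vol P := by linarith
  exact le_of_mul_le_mul_right hP' hP.vol_pos

lemma ae_le_of_forall_avgOn_le {f : Rn n → ℝ} (hf : LocallyIntegrable f volume)
    {Q : Set (Rn n)} (hQ : IsCube Q) {C : ℝ} (h : ∀ P, IsCube P → P ⊆ Q → avgOn P f ≤ C) :
    ∀ᵐ x ∂volume.restrict Q, f x ≤ C := by
  obtain ⟨c, R, hR, rfl⟩ := hQ
  rw [ae_restrict_iff' measurableSet_closedBall]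
  have hsphere : ∀ᵐ x, x ∉ sphere c R :=
    measure_eq_zero_iff_ae_notMem.1 (Measure.addHaar_sphere_of_ne_zero volume c hR.ne')
  filter_upwards [IsUnifLocDoublingMeasure.ae_tendsto_average volume hf 1, hsphere]
    with x hx hxs hxQ
  have hlim : Tendsto (fun r => avgOn (closedBall x r) f) (𝓝[>] 0) (𝓝 (f x)) := by
    simpa only [setAverage_eq_avgOn, id_eq] using hx (fun _ => x) id tendsto_id
      (eventually_nhdsWithin_of_forall fun r hr => by simpa using (mem_Ioi.1 hr).le)
  have hxc : dist x c < R := lt_of_le_of_ne (mem_closedBall.1 hxQ) hxs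
  refine le_of_tendsto hlim ?_
  filter_upwards [Ioo_mem_nhdsGT (sub_pos.2 hxc)] with r hr
  exact h _ ⟨x, r, hr.1, rfl⟩ (closedBall_subset_closedBall' (by linarith [hr.2]))

lemma essSup_inv_le_of_ae_le {w : Rn n → ℝ} (hw0 : ∀ x, 0 ≤ w x) {p : ℝ} (hp : 1 < p)
    {Q : Set (Rn n)} (hQ : IsCube Q) {C : ℝ}
    (h : ∀ᵐ x ∂volume.restrict Q, w x ^ (-(p - 1)⁻¹) ≤ C) :
    essSup (fun x => (w x)⁻¹) (volume.restrict Q) ≤ C ^ (p - 1) := by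
  have : (ae (volume.restrict Q)).NeBot := ae_neBot.2 (by simpa using hQ.volume_ne_zero)
  refine essSup_le_of_ae_le _ ?_ (isCoboundedUnder_le_of_le _ fun x => inv_nonneg.2 (hw0 x))
  filter_upwards [h] with x hx
  have hinv : (w x)⁻¹ = (w x ^ (-(p - 1)⁻¹)) ^ (p - 1) := by
    rw [← Real.rpow_mul (hw0 x), neg_mul, inv_mul_cancel₀ (by linarith), Real.rpow_neg_one]
  rw [hinv]
  exact Real.rpow_le_rpow (Real.rpow_nonneg (hw0 x) _) hx (by linarith)

lemma apRatio_of_ne_one {p : ℝ} (hp : p ≠ 1) (w : Rn n → ℝ) (Q : Set (Rn n)) :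
    apRatio p w Q = avgOn Q w * avgOn Q (fun x => w x ^ (-(p - 1)⁻¹)) ^ (p - 1) :=
  if_neg hp

lemma apRatio_nonneg {p : ℝ} (hp : p ≠ 1) {w : Rn n → ℝ} (hw0 : ∀ x, 0 ≤ w x)
    (Q : Set (Rn n)) : 0 ≤ apRatio p w Q := by
  rw [apRatio_of_ne_one hp]
  exact mul_nonneg (avgOn_nonneg hw0)
    (Real.rpow_nonneg (avgOn_nonneg fun x => Real.rpow_nonneg (hw0 x) _) _)

/-- When `w⁻¹` is not essentially bounded on `Q`, the `A_1` ratio takes the junk value `0`;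
otherwise `σ` is bounded on `Q`, which makes `M(σ χ_Q)` integrable. -/
lemma apRatio_one_le_of_fujiiWilson_le_one {p : ℝ} (hp : 1 < p) {w : Rn n → ℝ}
    (hw0 : ∀ x, 0 ≤ w x) {σ : Rn n → ℝ} (hσdef : σ = fun x => w x ^ (-(p - 1)⁻¹))
    (hσl : LocallyIntegrable σ volume) (hfw : BddAbove (fwSet σ)) (hF : fujiiWilson σ ≤ 1)
    {Q : Set (Rn n)} (hQ : IsCube Q) (hσQ : 0 < intOn σ Q) :
    apRatio 1 w Q ≤ apRatio p w Q := by
  have hσ0 : ∀ x, 0 ≤ σ x := fun x => hσdef ▸ Real.rpow_nonneg (hw0 x) _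
  rw [apRatio, if_pos rfl]
  by_cases hbdd : IsBoundedUnder (· ≤ ·) (ae (volume.restrict Q)) (fun x => (w x)⁻¹)
  · obtain ⟨B, hB⟩ := hbdd
    have hS : ∀ᵐ x ∂volume.restrict Q, σ x ≤ B ^ (p - 1)⁻¹ := by
      filter_upwards [eventually_map.1 hB] with x hx
      simp only [hσdef]
      rw [Real.rpow_neg (hw0 x), ← Real.inv_rpow (hw0 x)]
      exact Real.rpow_le_rpow (inv_nonneg.2 (hw0 x)) hx (inv_nonneg.2 (by linarith))
    have hσle := ae_le_of_forall_avgOn_le hσl hQ fun P hP hPQ =>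
      avgOn_le_avgOn_of_fujiiWilson_le_one hσ0 hσl hfw hF hQ hσQ hS hP hPQ
    subst hσdef
    rw [apRatio_of_ne_one hp.ne']
    exact mul_le_mul_of_nonneg_left (essSup_inv_le_of_ae_le hw0 hp hQ hσle) (avgOn_nonneg hw0)
  · rw [essSup, Real.limsup_of_not_isBoundedUnder hbdd, mul_zero]
    exact apRatio_nonneg hp.ne' hw0 Q

lemma apRatio_sub_le_of_reverseHolder {p : ℝ} (hp : 1 < p) {w : Rn n → ℝ}
    (hw0 : ∀ x, 0 ≤ w x) {σ : Rn n → ℝ} (hσdef : σ = fun x => w x ^ (-(p - 1)⁻¹))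
    {Q : Set (Rn n)} {K B : ℝ} (hK : 0 < K) (hB : 0 ≤ B)
    (hRH : avgOn Q (fun x => σ x ^ (1 + K⁻¹)) ≤ B * avgOn Q σ ^ (1 + K⁻¹)) :
    apRatio (p - (p - 1) / (K + 1)) w Q ≤ B ^ ((p - 1) * K / (K + 1)) * apRatio p w Q := by
  subst hσdef
  set a := avgOn Q fun x => w x ^ (-(p - 1)⁻¹)
  have ha : 0 ≤ a := avgOn_nonneg fun x => Real.rpow_nonneg (hw0 x) _
  have hp1 : p - 1 ≠ 0 := by linarith
  have hq : p - (p - 1) / (K + 1) - 1 = (p - 1) * K / (K + 1) := by field_simp; ring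
  have hq0 : 0 < (p - 1) * K / (K + 1) := by have := sub_pos.2 hp; positivity
  have hexp : -((p - 1) * K / (K + 1))⁻¹ = -(p - 1)⁻¹ * (1 + K⁻¹) := by field_simp
  have hpow : (1 + K⁻¹) * ((p - 1) * K / (K + 1)) = p - 1 := by field_simp
  rw [apRatio_of_ne_one (by linarith), apRatio_of_ne_one hp.ne', hq, hexp]
  simp only [Real.rpow_mul (hw0 _)]
  calc avgOn Q w * avgOn Q (fun x => (w x ^ (-(p - 1)⁻¹)) ^ (1 + K⁻¹)) ^ ((p - 1) * K / (K + 1))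
      ≤ avgOn Q w * (B * a ^ (1 + K⁻¹)) ^ ((p - 1) * K / (K + 1)) := by
        gcongr
        · exact avgOn_nonneg hw0
        · exact avgOn_nonneg fun x => Real.rpow_nonneg (Real.rpow_nonneg (hw0 x) _) _
    _ = B ^ ((p - 1) * K / (K + 1)) * (avgOn Q w * a ^ (p - 1)) := by
        rw [Real.mul_rpow hB (Real.rpow_nonneg ha _), ← Real.rpow_mul ha, hpow]
        ring

theorem stmt5_general {n : ℕ} (p : ℝ) (hp : 1 < p) (w : Rn n → ℝ) (hw0 : ∀ x, 0 ≤ w x)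
    (σ : Rn n → ℝ) (hσdef : σ = fun x => w x ^ (-(p - 1)⁻¹))
    (hσl : LocallyIntegrable σ volume)
    (hσpos : ∀ Q : Set (Rn n), IsCube Q → 0 < intOn σ Q)
    (hap : BddAbove (apSet p w))
    (hfw : BddAbove (fwSet σ)) (hfw1 : 1 ≤ fujiiWilson σ)
    (hRH : ∀ Q : Set (Rn n), IsCube Q → ∀ δ : ℝ, 0 ≤ δ →
      δ ≤ 1 / ((2 : ℝ) ^ (n + 1) * (fujiiWilson σ - 1)) →
      avgOn Q (fun x => σ x ^ (1 + δ)) ≤ 2 * fujiiWilson σ * (avgOn Q σ) ^ (1 + δ))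
    (ε : ℝ) (hε : ε = (p - 1) / ((2 : ℝ) ^ (n + 1) * (fujiiWilson σ - 1) + 1)) :
    ∀ Q : Set (Rn n), IsCube Q →
      apRatio (p - ε) w Q ≤ (2 * fujiiWilson σ) ^ (p - 1) * apConst p w := by
  intro Q hQ
  have hApQ : apRatio p w Q ≤ apConst p w := le_csSup hap ⟨Q, hQ, rfl⟩
  have hAp0 : 0 ≤ apConst p w := (apRatio_nonneg hp.ne' hw0 Q).trans hApQ
  obtain hF | hF := hfw1.eq_or_lt
  · have hε1 : p - ε = 1 := by rw [hε, ← hF]; simp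
    calc apRatio (p - ε) w Q = apRatio 1 w Q := by rw [hε1]
      _ ≤ apRatio p w Q :=
        apRatio_one_le_of_fujiiWilson_le_one hp hw0 hσdef hσl hfw hF.ge hQ (hσpos Q hQ)
      _ ≤ (2 * fujiiWilson σ) ^ (p - 1) * apConst p w :=
        hApQ.trans (le_mul_of_one_le_left hAp0 (Real.one_le_rpow (by linarith) (by linarith)))
  · set K := (2 : ℝ) ^ (n + 1) * (fujiiWilson σ - 1)
    have hK : 0 < K := mul_pos (by positivity) (sub_pos.2 hF)
    have hq : (p - 1) * K / (K + 1) ≤ p - 1 := by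
      rw [div_le_iff₀ (by positivity)]
      nlinarith
    rw [hε]
    calc apRatio (p - (p - 1) / (K + 1)) w Q
        ≤ (2 * fujiiWilson σ) ^ ((p - 1) * K / (K + 1)) * apRatio p w Q :=
          apRatio_sub_le_of_reverseHolder hp hw0 hσdef hK (by linarith)
            (hRH Q hQ K⁻¹ (inv_nonneg.2 hK.le) (one_div K).ge)
      _ ≤ (2 * fujiiWilson σ) ^ (p - 1) * apConst p w := by
          gcongr
          · exact apRatio_nonneg hp.ne' hw0 Q
          · linarith

/-- Left-openness of the `A_p` classes: if `w ∈ A_p` and the dual weight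
`σ = w^(1-p')` is in `A_∞`, then with `ε = (p-1)/(2^(n+1)([σ]_{A∞}-1)+1)` one has
`w ∈ A_(p-ε)` with constant at most `(2[σ]_{A∞})^(p-1) [w]_{A_p}`; one may assume
the sharp reverse Hölder inequality for `σ`. -/
theorem stmt5 {n : ℕ} (p : ℝ) (hp : 1 < p) (w : Rn n → ℝ) (hw0 : ∀ x, 0 ≤ w x)
    (hwl : LocallyIntegrable w volume)
    (σ : Rn n → ℝ) (hσdef : σ = fun x => w x ^ (-(p - 1)⁻¹))
    (hσl : LocallyIntegrable σ volume)
    (hpos : ∀ Q : Set (Rn n), IsCube Q → 0 < intOn w Q)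
    (hσpos : ∀ Q : Set (Rn n), IsCube Q → 0 < intOn σ Q)
    (hap : BddAbove (apSet p w))
    (hfw : BddAbove (fwSet σ)) (hfw1 : 1 ≤ fujiiWilson σ)
    (hRH : ∀ Q : Set (Rn n), IsCube Q → ∀ δ : ℝ, 0 ≤ δ →
      δ ≤ 1 / ((2 : ℝ) ^ (n + 1) * (fujiiWilson σ - 1)) →
      avgOn Q (fun x => σ x ^ (1 + δ)) ≤ 2 * fujiiWilson σ * (avgOn Q σ) ^ (1 + δ))
    (ε : ℝ) (hε : ε = (p - 1) / ((2 : ℝ) ^ (n + 1) * (fujiiWilson σ - 1) + 1)) :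
    ∀ Q : Set (Rn n), IsCube Q →
      apRatio (p - ε) w Q ≤ (2 * fujiiWilson σ) ^ (p - 1) * apConst p w :=
  stmt5_general p hp w hw0 σ hσdef hσl hσpos hap hfw hfw1 hRH ε hε
end
end

section
/- Let w be a weight (nonnegative locally integrable, positive a.e.) on ℝⁿ with logarithmic A_∞ constant [w]_{A_∞}^{log} := sup_Q (1/w(Q)) ∫_Q (1 + log⁺(w(x)/w_Q)) w(x) dx < ∞, where w_Q = (1/|Q|)∫_Q w. Then log w belongs to weighted BMO with ‖log w‖_{BMO_w} ≤ 8([w]_{A_∞}^{log} - 1), where ‖f‖_{BMO_w} = sup_Q (1/w(Q)) ∫_Q |f - f_{Q,w}| w dx and f_{Q,w} = (1/w(Q))∫_Q f w dx. -/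
open MeasureTheory Real

noncomputable section

/-! Put `m = w_Q` and `t = log w - log m`. The definition of `[w]^{log}_{A_∞}` bounds
`∫_Q t⁺ w` by `([w]^{log}_{A_∞} - 1) w(Q)`, and `log s ≤ s - 1` (Gibbs' inequality) gives
`∫_Q t w ≥ 0`. As `|t| = 2 t⁺ - t`, the weighted oscillation of `log w` about `log m` is at most
`2 ([w]^{log}_{A_∞} - 1) w(Q)`; moving the centre to the weighted mean `(log w)_{Q,w}` at most
doubles it, so the constant is in fact `4`. -/

namespace Real

lemma log_sub_log_mul_le_sub {m w : ℝ} (hm : 0 < m) (hw : 0 ≤ w) :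
    (log m - log w) * w ≤ m - w := by
  rcases hw.eq_or_lt with rfl | hw
  · simpa using hm.le
  calc (log m - log w) * w = log (m / w) * w := by rw [log_div hm.ne' hw.ne']
    _ ≤ (m / w - 1) * w := by gcongr; exact log_le_sub_one_of_pos (by positivity)
    _ = m - w := by field_simp

lemma max_log_div_mul_eq {m w : ℝ} (hm : 0 < m) (hw : 0 ≤ w) :
    max (log (w / m)) 0 * w = max ((log w - log m) * w) 0 := by
  rcases hw.eq_or_lt with rfl | hw
  · simp
  rw [log_div hw.ne' hm.ne', max_mul_of_nonneg _ _ hw.le, zero_mul]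

end Real

lemma abs_eq_two_mul_max_zero_sub (a : ℝ) : |a| = 2 * max a 0 - a := by
  rcases le_total 0 a with h | h
  · rw [abs_of_nonneg h, max_eq_left h]; ring
  · rw [abs_of_nonpos h, max_eq_right h]; ring

section Integrals

open Real

variable {α : Type*} [MeasurableSpace α] {μ : Measure α} {w f : α → ℝ}

lemma integral_abs_le_two_mul_integral_max_zero (hf : Integrable f μ) (h : 0 ≤ ∫ x, f x ∂μ) :
    ∫ x, |f x| ∂μ ≤ 2 * ∫ x, max (f x) 0 ∂μ := by
  simp_rw [abs_eq_two_mul_max_zero_sub (f _)]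
  rw [integral_sub (hf.pos_part.const_mul 2) hf, integral_const_mul]
  linarith

lemma integrable_sub_mul (hwi : Integrable w μ) (hfw : Integrable (fun x => f x * w x) μ)
    (c : ℝ) : Integrable (fun x => (f x - c) * w x) μ :=
  (hfw.sub (hwi.const_mul c)).congr (.of_forall fun x => by simp [sub_mul])

lemma integrable_abs_sub_mul (hw : ∀ x, 0 ≤ w x) (hwi : Integrable w μ)
    (hfw : Integrable (fun x => f x * w x) μ) (c : ℝ) :
    Integrable (fun x => |f x - c| * w x) μ :=
  (integrable_sub_mul hwi hfw c).abs.congr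
    (.of_forall fun x => by simp [abs_mul, abs_of_nonneg (hw x)])

lemma integral_abs_sub_wavg_mul_le (hw : ∀ x, 0 ≤ w x) (hW : ∫ x, w x ∂μ ≠ 0)
    (hwi : Integrable w μ) (hfw : Integrable (fun x => f x * w x) μ) (c : ℝ) :
    ∫ x, |f x - (∫ y, w y ∂μ)⁻¹ * ∫ y, f y * w y ∂μ| * w x ∂μ
      ≤ 2 * ∫ x, |f x - c| * w x ∂μ := by
  set W := ∫ y, w y ∂μ
  set b := W⁻¹ * ∫ y, f y * w y ∂μ with hb
  have hshift : ∫ x, (f x - c) * w x ∂μ = (b - c) * W := by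
    simp only [sub_mul]
    rw [integral_sub hfw (hwi.const_mul c), integral_const_mul, hb, mul_right_comm,
      inv_mul_cancel₀ hW, one_mul]
  have hcenter : |c - b| * W ≤ ∫ x, |f x - c| * w x ∂μ :=
    calc |c - b| * W = |∫ x, (f x - c) * w x ∂μ| := by
          rw [hshift, abs_mul, abs_of_nonneg (integral_nonneg hw), abs_sub_comm]
      _ ≤ ∫ x, |(f x - c) * w x| ∂μ := abs_integral_le_integral_abs
      _ = ∫ x, |f x - c| * w x ∂μ := by simp_rw [abs_mul, abs_of_nonneg (hw _)]
  have htriangle : ∫ x, |f x - b| * w x ∂μ ≤ ∫ x, |f x - c| * w x ∂μ + |c - b| * W :=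
    calc ∫ x, |f x - b| * w x ∂μ ≤ ∫ x, (|f x - c| * w x + |c - b| * w x) ∂μ := by
          refine integral_mono (integrable_abs_sub_mul hw hwi hfw b)
            ((integrable_abs_sub_mul hw hwi hfw c).add (hwi.const_mul _)) fun x => ?_
          rw [← add_mul]
          exact mul_le_mul_of_nonneg_right (abs_sub_le _ _ _) (hw x)
      _ = ∫ x, |f x - c| * w x ∂μ + |c - b| * W := by
          rw [integral_add (integrable_abs_sub_mul hw hwi hfw c) (hwi.const_mul _),
            integral_const_mul]
  linarith

lemma integrable_max_log_div_mul (hw : ∀ x, 0 ≤ w x) (hwi : Integrable w μ)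
    (hlog : Integrable (fun x => log (w x) * w x) μ) {m : ℝ} (hm : 0 < m) :
    Integrable (fun x => max (log (w x / m)) 0 * w x) μ :=
  (integrable_sub_mul hwi hlog (log m)).pos_part.congr
    (.of_forall fun x => (max_log_div_mul_eq hm (hw x)).symm)

lemma integral_log_sub_log_average_mul_nonneg [IsFiniteMeasure μ] (hw : ∀ x, 0 ≤ w x)
    (hwi : Integrable w μ) (hlog : Integrable (fun x => log (w x) * w x) μ)
    (hm : 0 < ⨍ x, w x ∂μ) :
    0 ≤ ∫ x, (log (w x) - log (⨍ y, w y ∂μ)) * w x ∂μ := by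
  set m := ⨍ y, w y ∂μ
  have h : ∫ x, -((log (w x) - log m) * w x) ∂μ ≤ ∫ x, (m - w x) ∂μ :=
    integral_mono (integrable_sub_mul hwi hlog _).neg ((integrable_const m).sub hwi) fun x => by
      linarith [log_sub_log_mul_le_sub hm (hw x)]
  rw [integral_neg, integral_sub (integrable_const m) hwi, integral_average, sub_self] at h
  linarith

lemma integral_abs_log_sub_wavg_mul_le [IsFiniteMeasure μ] (hw : ∀ x, 0 ≤ w x)
    (hwi : Integrable w μ) (hlog : Integrable (fun x => log (w x) * w x) μ)
    (hm : 0 < ⨍ x, w x ∂μ) :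
    ∫ x, |log (w x) - (∫ y, w y ∂μ)⁻¹ * ∫ y, log (w y) * w y ∂μ| * w x ∂μ
      ≤ 4 * ∫ x, max (log (w x / ⨍ y, w y ∂μ)) 0 * w x ∂μ := by
  have hW : ∫ y, w y ∂μ ≠ 0 := fun h => hm.ne' (by rw [average_eq, h, smul_zero])
  set m := ⨍ y, w y ∂μ
  calc _ ≤ 2 * ∫ x, |log (w x) - log m| * w x ∂μ :=
        integral_abs_sub_wavg_mul_le hw hW hwi hlog _
    _ = 2 * ∫ x, |(log (w x) - log m) * w x| ∂μ := by
        simp_rw [abs_mul, abs_of_nonneg (hw _)]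
    _ ≤ 2 * (2 * ∫ x, max ((log (w x) - log m) * w x) 0 ∂μ) := by
        gcongr
        exact integral_abs_le_two_mul_integral_max_zero (integrable_sub_mul hwi hlog _)
          (integral_log_sub_log_average_mul_nonneg hw hwi hlog hm)
    _ = 4 * ∫ x, max (log (w x / m)) 0 * w x ∂μ := by
        simp_rw [max_log_div_mul_eq hm (hw _)]
        ring

end Integrals

section Cubes

variable {n : ℕ} {Q : Set (Rn n)}

lemma IsCube.isCompact_s6 (hQ : IsCube Q) : IsCompact Q := by
  obtain ⟨c, r, -, rfl⟩ := hQ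
  exact isCompact_closedBall c r

lemma IsCube.vol_pos_s6 (hQ : IsCube Q) : 0 < vol Q := by
  obtain ⟨c, r, hr, rfl⟩ := hQ
  refine ENNReal.toReal_pos (Metric.measure_closedBall_pos volume c hr).ne' ?_
  exact (isCompact_closedBall c r).measure_lt_top.ne

lemma avgOn_eq_setAverage (Q : Set (Rn n)) (f : Rn n → ℝ) : avgOn Q f = ⨍ x in Q, f x := by
  rw [setAverage_eq, avgOn, vol, smul_eq_mul, measureReal_def]

lemma avgOn_pos {w : Rn n → ℝ} (hQ : IsCube Q) (hW : 0 < intOn w Q) : 0 < avgOn Q w :=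
  mul_pos (inv_pos.2 hQ.vol_pos_s6) hW

lemma integral_max_log_div_avgOn_mul_le {w : Rn n → ℝ} (hQ : IsCube Q) (hw : ∀ x, 0 ≤ w x)
    (hwi : IntegrableOn w Q) (hW : 0 < intOn w Q)
    (hlog : IntegrableOn (fun x => log (w x) * w x) Q) (hbdd : BddAbove (logAinfSet w)) :
    ∫ x in Q, max (log (w x / avgOn Q w)) 0 * w x ≤ (logAinf w - 1) * intOn w Q := by
  have h : (intOn w Q)⁻¹ * ∫ x in Q, (1 + max (log (w x / avgOn Q w)) 0) * w x ≤ logAinf w :=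
    le_csSup hbdd ⟨Q, hQ, rfl⟩
  simp only [add_mul, one_mul] at h
  rw [integral_add hwi (integrable_max_log_div_mul hw hwi hlog (avgOn_pos hQ hW)), inv_mul_le_iff₀ hW] at h
  rw [sub_mul, one_mul]
  exact le_sub_iff_add_le'.2 (by simpa [intOn, mul_comm] using h)

end Cubes

theorem stmt6_general {n : ℕ} (w : Rn n → ℝ) (hw0 : ∀ x, 0 ≤ w x)
    (hwl : LocallyIntegrable w volume)
    (hpos : ∀ Q : Set (Rn n), IsCube Q → 0 < intOn w Q)
    (hlogint : ∀ Q : Set (Rn n), IsCube Q →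
      IntegrableOn (fun x => Real.log (w x) * w x) Q volume)
    (hbdd : BddAbove (logAinfSet w)) :
    ∀ Q : Set (Rn n), IsCube Q →
      (intOn w Q)⁻¹ *
          (∫ x in Q, |Real.log (w x) - wavgOn w Q (fun y => Real.log (w y))| * w x)
        ≤ 8 * (logAinf w - 1) := by
  intro Q hQ
  have : IsFiniteMeasure (volume.restrict Q) :=
    isFiniteMeasure_restrict.2 hQ.isCompact_s6.measure_lt_top.ne
  have hwi : IntegrableOn w Q := hwl.integrableOn_isCompact hQ.isCompact_s6
  have hW := hpos Q hQ
  have hosc := integral_abs_log_sub_wavg_mul_le hw0 hwi (hlogint Q hQ)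
    (avgOn_eq_setAverage Q w ▸ avgOn_pos hQ hW)
  rw [← avgOn_eq_setAverage] at hosc
  have hlogA := integral_max_log_div_avgOn_mul_le hQ hw0 hwi hW (hlogint Q hQ) hbdd
  have hL : 0 ≤ logAinf w - 1 := nonneg_of_mul_nonneg_left
    ((integral_nonneg fun x => mul_nonneg (le_max_right _ _) (hw0 x)).trans hlogA) hW
  calc (intOn w Q)⁻¹ * ∫ x in Q, |log (w x) - wavgOn w Q (fun y => log (w y))| * w x
      ≤ (intOn w Q)⁻¹ * (4 * ((logAinf w - 1) * intOn w Q)) := by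
        gcongr
        exact hosc.trans (by gcongr)
    _ = 4 * (logAinf w - 1) := by field_simp
    _ ≤ 8 * (logAinf w - 1) := by linarith

/-- If the logarithmic `A_∞` constant of a weight `w` is finite, then `log w`
belongs to weighted `BMO` with `‖log w‖_{BMO_w} ≤ 8([w]^{log}_{A∞} - 1)`. -/
theorem stmt6 {n : ℕ} (w : Rn n → ℝ) (hw0 : ∀ x, 0 ≤ w x)
    (hwpos : ∀ᵐ x ∂(volume : Measure (Rn n)), 0 < w x)
    (hwl : LocallyIntegrable w volume)
    (hpos : ∀ Q : Set (Rn n), IsCube Q → 0 < intOn w Q)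
    (hlogint : ∀ Q : Set (Rn n), IsCube Q →
      IntegrableOn (fun x => Real.log (w x) * w x) Q volume)
    (hbdd : BddAbove (logAinfSet w)) :
    ∀ Q : Set (Rn n), IsCube Q →
      (intOn w Q)⁻¹ *
          (∫ x in Q, |Real.log (w x) - wavgOn w Q (fun y => Real.log (w y))| * w x)
        ≤ 8 * (logAinf w - 1) :=
  stmt6_general w hw0 hwl hpos hlogint hbdd
end
end

section
/- Let w be a nonnegative integrable function on a cube Q with w(Q) = ∫_Q w > 0, and let w_Q = (1/|Q|)∫_Q w. Then (1/w(Q)) ∫_Q |log w(x) - (log w)_{Q,w}| w(x) dx ≤ (8/w(Q)) ∫_Q log⁺(w(x)/w_Q) w(x) dx, where (log w)_{Q,w} = (1/w(Q))∫_Q (log w) w dx. -/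
open MeasureTheory Real

noncomputable section

/-! The estimate holds with constant `2`. Since `∫ (log w - L) w = 0` for the weighted mean
`L = (log w)_{Q,w}`, the oscillation is twice the integral of `(log w - L)⁺ w`. Integrating
`log (w_Q / w) ≤ w_Q / w - 1` against `w` gives the Jensen inequality `log w_Q ≤ L`, hence
`(log w - L)⁺ ≤ log⁺ (w / w_Q)`. -/

theorem Real.log_mul_sub_log_mul_le {a b : ℝ} (ha : 0 < a) (hb : 0 ≤ b) :
    log a * b - log b * b ≤ a - b := by
  rcases hb.eq_or_lt with rfl | hb
  · simpa using ha.le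
  have h := mul_le_mul_of_nonneg_right (log_le_sub_one_of_pos (div_pos ha hb)) hb.le
  rwa [log_div ha.ne' hb.ne', sub_mul, sub_mul, div_mul_cancel₀ _ hb.ne', one_mul] at h

namespace MeasureTheory

variable {α : Type*} [MeasurableSpace α] {μ : Measure α}

theorem integral_abs_eq_two_mul_integral_max_zero {g : α → ℝ} (hg : Integrable g μ)
    (hg0 : ∫ x, g x ∂μ = 0) : ∫ x, |g x| ∂μ = 2 * ∫ x, max (g x) 0 ∂μ := by
  have habs : (fun x => |g x|) = fun x => 2 * max (g x) 0 - g x := by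
    funext x
    rcases le_total (g x) 0 with h | h
    · rw [abs_of_nonpos h, max_eq_right h]; ring
    · rw [abs_of_nonneg h, max_eq_left h]; ring
  rw [habs, integral_sub (hg.pos_part.const_mul 2) hg, integral_const_mul, hg0, sub_zero]

variable [IsFiniteMeasure μ] {w : α → ℝ}

theorem average_pos_of_integral_pos (hpos : 0 < ∫ x, w x ∂μ) : 0 < ⨍ x, w x ∂μ := by
  have : NeZero μ := ⟨fun h => by simp [h] at hpos⟩
  rw [average_eq, smul_eq_mul]
  exact mul_pos (inv_pos.2 measureReal_univ_pos) hpos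

theorem log_average_le_weighted_average_log (hw0 : 0 ≤ᵐ[μ] w) (hw : Integrable w μ)
    (hlog : Integrable (fun x => log (w x) * w x) μ) (hpos : 0 < ∫ x, w x ∂μ) :
    log (⨍ x, w x ∂μ) ≤ (∫ x, w x ∂μ)⁻¹ * ∫ x, log (w x) * w x ∂μ := by
  set m := ⨍ x, w x ∂μ
  have hm : 0 < m := average_pos_of_integral_pos hpos
  have hint : ∫ x, log m * w x - log (w x) * w x ∂μ ≤ ∫ x, m - w x ∂μ := by
    refine integral_mono_ae ((hw.const_mul _).sub hlog) ((integrable_const m).sub hw) ?_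
    filter_upwards [hw0] with x hx
    exact log_mul_sub_log_mul_le hm hx
  rw [integral_sub (hw.const_mul _) hlog, integral_sub (integrable_const m) hw,
    integral_average, integral_const_mul] at hint
  rw [le_inv_mul_iff₀ hpos]
  linarith

theorem integral_abs_log_sub_weighted_average_mul_le (hw0 : 0 ≤ᵐ[μ] w) (hw : Integrable w μ)
    (hlog : Integrable (fun x => log (w x) * w x) μ) (hpos : 0 < ∫ x, w x ∂μ) :
    ∫ x, |log (w x) - (∫ y, w y ∂μ)⁻¹ * ∫ y, log (w y) * w y ∂μ| * w x ∂μ ≤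
      2 * ∫ x, max (log (w x / ⨍ y, w y ∂μ)) 0 * w x ∂μ := by
  set W := ∫ x, w x ∂μ
  set L := W⁻¹ * ∫ x, log (w x) * w x ∂μ
  set m := ⨍ x, w x ∂μ
  have hmL : log m ≤ L := log_average_le_weighted_average_log hw0 hw hlog hpos
  have hm : 0 < m := average_pos_of_integral_pos hpos
  have hg : Integrable (fun x => (log (w x) - L) * w x) μ := by
    simpa only [sub_mul, Pi.sub_def] using hlog.sub (hw.const_mul L)
  have hg0 : ∫ x, (log (w x) - L) * w x ∂μ = 0 := by
    simp_rw [sub_mul]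
    rw [integral_sub hlog (hw.const_mul L), integral_const_mul]
    simp only [L]
    field_simp
    ring
  have hlog_div : Integrable (fun x => max (log (w x / m)) 0 * w x) μ := by
    refine (hlog.sub (hw.const_mul (log m))).pos_part.congr ?_
    filter_upwards [hw0] with x hx
    rcases hx.eq_or_lt with hx | hx
    · simp [← hx]
    · rw [Pi.sub_apply, log_div hx.ne' hm.ne', max_mul_of_nonneg _ _ hx.le, zero_mul, sub_mul]
  calc ∫ x, |log (w x) - L| * w x ∂μ = ∫ x, |(log (w x) - L) * w x| ∂μ := by
        refine integral_congr_ae ?_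
        filter_upwards [hw0] with x hx
        rw [abs_mul, abs_of_nonneg hx]
    _ = 2 * ∫ x, max ((log (w x) - L) * w x) 0 ∂μ :=
        integral_abs_eq_two_mul_integral_max_zero hg hg0
    _ ≤ 2 * ∫ x, max (log (w x / m)) 0 * w x ∂μ := by
        refine mul_le_mul_of_nonneg_left (integral_mono_ae hg.pos_part hlog_div ?_) two_pos.le
        filter_upwards [hw0] with x hx
        rcases hx.eq_or_lt with hx | hx
        · simp [← hx]
        rw [log_div hx.ne' hm.ne', max_mul_of_nonneg _ _ hx.le, zero_mul]
        gcongr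

end MeasureTheory

/-- Local estimate: for a nonnegative integrable `w` on a cube `Q` with `w(Q) > 0`,
the weighted oscillation of `log w` is controlled by `8` times the weighted
integral of `log⁺(w/w_Q)`. -/
theorem stmt7 {n : ℕ} (Q : Set (Rn n)) (hQ : IsCube Q) (w : Rn n → ℝ)
    (hw0 : ∀ x, 0 ≤ w x) (hwint : IntegrableOn w Q volume) (hpos : 0 < intOn w Q)
    (hlogint : IntegrableOn (fun x => Real.log (w x) * w x) Q volume) :
    (intOn w Q)⁻¹ *
        (∫ x in Q, |Real.log (w x) - wavgOn w Q (fun y => Real.log (w y))| * w x)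
      ≤ 8 * ((intOn w Q)⁻¹ * ∫ x in Q, max (Real.log (w x / avgOn Q w)) 0 * w x) := by
  have : IsFiniteMeasure (volume.restrict Q) := by
    obtain ⟨c, r, -, rfl⟩ := hQ
    exact isFiniteMeasure_restrict.2 (isCompact_closedBall c r).measure_lt_top.ne
  have hoscillation := integral_abs_log_sub_weighted_average_mul_le
    (ae_of_all _ hw0) hwint hlogint hpos
  rw [setAverage_eq, smul_eq_mul] at hoscillation
  have hpos_part : 0 ≤ ∫ x in Q, max (log (w x / avgOn Q w)) 0 * w x :=
    integral_nonneg fun x => mul_nonneg (le_max_right _ _) (hw0 x)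
  calc _ ≤ (intOn w Q)⁻¹ * (2 * ∫ x in Q, max (log (w x / avgOn Q w)) 0 * w x) := by
        gcongr
        exact hoscillation
    _ ≤ _ := by nlinarith [inv_nonneg.2 hpos.le]
end
end

section
/- Let w be a positive measurable function on ℝⁿ such that log w ∈ BMO, and suppose that with r := α_n/(2‖log w‖_{BMO}) one has r ≥ 1, where α_n is the constant in the exponential John–Nirenberg inequality, i.e., |{x ∈ Q : |log w(x) − (log w)_Q| > t}| ≤ 2 exp(−α_n t/‖log w‖_{BMO})|Q| for every cube Q and t > 0. Then w ∈ A_p for p = 1 + 1/r with [w]_{A_p} ≤ 3^{2(p−1)}. -/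
open MeasureTheory Real

noncomputable section

section Helpers
open MeasureTheory Real Set
open scoped ENNReal

lemma jensenL {X : Type*} [MeasurableSpace X] (μ : Measure X) {f : X → ℝ≥0∞}
    (hf : AEMeasurable f μ) {r : ℝ} (hr : 1 ≤ r) :
    ∫⁻ x, (f x) ^ (1/r) ∂μ ≤ (∫⁻ x, f x ∂μ) ^ (1/r) * (μ Set.univ) ^ (1 - 1/r) := by
  rcases eq_or_lt_of_le hr with h1 | h1
  · simp [← h1]
  · have hpq : Real.HolderConjugate r (Real.conjExponent r) :=
      Real.HolderConjugate.conjExponent h1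
    have hq : 1 / Real.conjExponent r = 1 - 1/r := by
      have := hpq.inv_add_inv_eq_one
      rw [one_div, one_div]; linarith [this]
    have key := ENNReal.lintegral_mul_le_Lp_mul_Lq μ hpq
      (hf.pow_const (1/r)) (aemeasurable_const (b := (1:ℝ≥0∞)))
    simp only [Pi.mul_apply, mul_one, ENNReal.one_rpow, lintegral_const, one_mul] at key
    calc ∫⁻ x, (f x) ^ (1/r) ∂μ
        ≤ (∫⁻ x, ((f x) ^ (1/r)) ^ r ∂μ) ^ (1/r) * (μ Set.univ) ^ (1 / Real.conjExponent r) :=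
          key
      _ = (∫⁻ x, f x ∂μ) ^ (1/r) * (μ Set.univ) ^ (1 - 1/r) := by
          rw [hq]
          congr 1
          congr 1
          refine lintegral_congr fun x => ?_
          rw [← ENNReal.rpow_mul, one_div, inv_mul_cancel₀ (by linarith : r ≠ 0),
            ENNReal.rpow_one]

lemma tailL {X : Type*} [MeasurableSpace X] (μ : Measure X) [SFinite μ] {g : X → ℝ}
    (hg : Measurable g) {r : ℝ} (hr : 0 < r)
    (hJN : ∀ t : ℝ, 0 < t →
      μ {x | t < g x} ≤ ENNReal.ofReal (2 * Real.exp (-(2*r*t))) * μ Set.univ) :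
    ∫⁻ x, ENNReal.ofReal (Real.exp (r * g x)) ∂μ ≤ 3 * μ Set.univ := by
  rw [lintegral_eq_lintegral_meas_lt μ (Filter.Eventually.of_forall fun x => (Real.exp_pos _).le)
    ((hg.const_mul r).exp.aemeasurable)]
  have hsplit : Ioi (0:ℝ) = Ioc 0 1 ∪ Ioi 1 := (Ioc_union_Ioi_eq_Ioi zero_le_one).symm
  rw [hsplit, lintegral_union measurableSet_Ioi (Ioc_disjoint_Ioi le_rfl)]
  have h1 : ∫⁻ t in Ioc (0:ℝ) 1, μ {a | t < Real.exp (r * g a)} ≤ μ Set.univ := by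
    calc ∫⁻ t in Ioc (0:ℝ) 1, μ {a | t < Real.exp (r * g a)}
        ≤ ∫⁻ _ in Ioc (0:ℝ) 1, μ Set.univ := lintegral_mono fun t => measure_mono (subset_univ _)
      _ = μ Set.univ := by
          rw [lintegral_const, Measure.restrict_apply_univ, Real.volume_Ioc]
          norm_num
  have h2 : ∫⁻ t in Ioi (1:ℝ), μ {a | t < Real.exp (r * g a)} ≤ 2 * μ Set.univ := by
    have hpt : ∀ t ∈ Ioi (1:ℝ), μ {a | t < Real.exp (r * g a)}
        ≤ ENNReal.ofReal (2 * t ^ (-2:ℝ)) * μ Set.univ := by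
      intro t ht
      have ht1 : (1:ℝ) < t := ht
      have ht0 : (0:ℝ) < t := lt_trans one_pos ht1
      have hlt : (0:ℝ) < Real.log t / r := div_pos (Real.log_pos ht1) hr
      have hsub : {a | t < Real.exp (r * g a)} ⊆ {a | Real.log t / r < g a} := by
        intro a ha
        have h' : Real.log t < r * g a := by
          have := Real.log_lt_log ht0 ha
          rwa [Real.log_exp] at this
        exact (div_lt_iff₀ hr).mpr (by linarith)
      have := hJN (Real.log t / r) hlt
      have hexp : 2 * Real.exp (-(2 * r * (Real.log t / r))) = 2 * t ^ (-2:ℝ) := by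
        rw [Real.rpow_def_of_pos ht0]
        congr 1
        congr 1
        field_simp
      calc μ {a | t < Real.exp (r * g a)} ≤ μ {a | Real.log t / r < g a} := measure_mono hsub
        _ ≤ ENNReal.ofReal (2 * Real.exp (-(2 * r * (Real.log t / r)))) * μ Set.univ := this
        _ = ENNReal.ofReal (2 * t ^ (-2:ℝ)) * μ Set.univ := by rw [hexp]
    have hmeas : Measurable fun t : ℝ => ENNReal.ofReal (2 * t ^ (-2:ℝ)) * μ Set.univ :=
      (((measurable_id.pow_const _).const_mul 2).ennreal_ofReal).mul_const _
    calc ∫⁻ t in Ioi (1:ℝ), μ {a | t < Real.exp (r * g a)}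
        ≤ ∫⁻ t in Ioi (1:ℝ), ENNReal.ofReal (2 * t ^ (-2:ℝ)) * μ Set.univ :=
          setLIntegral_mono hmeas hpt
      _ = (∫⁻ t in Ioi (1:ℝ), ENNReal.ofReal (2 * t ^ (-2:ℝ))) * μ Set.univ :=
          lintegral_mul_const _ (((measurable_id.pow_const _).const_mul 2).ennreal_ofReal)
      _ = 2 * μ Set.univ := by
          congr 1
          have hint : IntegrableOn (fun t : ℝ => 2 * t ^ (-2:ℝ)) (Ioi 1) :=
            (integrableOn_Ioi_rpow_of_lt (by norm_num) one_pos).const_mul 2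
          rw [← ofReal_integral_eq_lintegral_ofReal hint ?_]
          · rw [MeasureTheory.integral_const_mul, integral_Ioi_rpow_of_lt (by norm_num) one_pos]
            norm_num
          · filter_upwards [ae_restrict_mem measurableSet_Ioi] with t ht
            have : (0:ℝ) < t := lt_trans one_pos ht
            positivity
  calc _ ≤ μ Set.univ + 2 * μ Set.univ := add_le_add h1 h2
    _ = 3 * μ Set.univ := by ring

lemma exp_rpow' (a b : ℝ) : (Real.exp a) ^ b = Real.exp (a * b) := (Real.exp_mul a b).symm

end Helpers

/-- If `log w ∈ BMO` and `r = α/(2 ‖log w‖_BMO) ≥ 1` (with `α` the constant in the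
John–Nirenberg inequality), then `w ∈ A_p` for `p = 1 + 1/r` with
`[w]_{A_p} ≤ 3^(2(p-1))`. -/
theorem stmt14 {n : ℕ} (w : Rn n → ℝ) (hw : ∀ x, 0 < w x) (hmeas : Measurable w)
    (hloc : LocallyIntegrable (fun x => Real.log (w x)) volume)
    (hbdd : BddAbove (bmoSet (fun x => Real.log (w x))))
    (α : ℝ) (hα : 0 < α)
    (hJN : ∀ Q : Set (Rn n), IsCube Q → ∀ t : ℝ, 0 < t →
      volume {x ∈ Q | |Real.log (w x) - avgOn Q (fun y => Real.log (w y))| > t}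
        ≤ ENNReal.ofReal
            (2 * Real.exp (-(α * t) / bmoNorm (fun x => Real.log (w x)))) * volume Q)
    (r : ℝ) (hrdef : r = α / (2 * bmoNorm (fun x => Real.log (w x)))) (hr : 1 ≤ r)
    (p : ℝ) (hpdef : p = 1 + 1 / r) :
    ∀ Q : Set (Rn n), IsCube Q → apRatio p w Q ≤ (3 : ℝ) ^ (2 * (p - 1)) := by
  intro Q hQ
  classical
  set B := bmoNorm (fun x => Real.log (w x)) with hBdef
  have hr0 : (0:ℝ) < r := lt_of_lt_of_le one_pos hr
  have hB : 0 < B := by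
    rcases lt_trichotomy B 0 with h | h | h
    · have : r < 0 := by rw [hrdef]; exact div_neg_of_pos_of_neg hα (by linarith)
      linarith
    · rw [hrdef, h, mul_zero, div_zero] at hr; norm_num at hr
    · exact h
  have hα2 : α = 2 * r * B := by
    rw [hrdef]; field_simp
  have hexpC : ∀ t : ℝ, -(α * t) / B = -(2 * r * t) := by
    intro t; rw [hα2]; field_simp
  obtain ⟨c, ρ, hρ, hQeq⟩ := hQ
  have hQm : MeasurableSet Q := by rw [hQeq]; exact measurableSet_closedBall
  have hQvol : volume Q = ENNReal.ofReal ((2*ρ)^n) := by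
    rw [hQeq]; simpa using Real.volume_pi_closedBall c hρ.le
  have hQfin : volume Q ≠ ⊤ := by rw [hQvol]; exact ENNReal.ofReal_ne_top
  have hQpos : 0 < volume Q := by
    rw [hQvol]; exact ENNReal.ofReal_pos.mpr (by positivity)
  set V := vol Q with hVdef
  have hV : 0 < V := ENNReal.toReal_pos hQpos.ne' hQfin
  have hVQ : volume Q = ENNReal.ofReal V := (ENNReal.ofReal_toReal hQfin).symm
  set cQ := avgOn Q (fun y => Real.log (w y)) with hcQ
  set g : Rn n → ℝ := fun x => |Real.log (w x) - cQ| with hgdef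
  have hf : Measurable fun x => Real.log (w x) := Real.measurable_log.comp hmeas
  have hg : Measurable g := (hf.sub measurable_const).abs
  set E : Rn n → ℝ := fun x => Real.exp (r * g x) with hEdef
  have hEmeas : Measurable E := (hg.const_mul r).exp
  have hgnn : ∀ x, 0 ≤ g x := fun x => abs_nonneg _
  have hE1 : ∀ x, 1 ≤ E x := fun x =>
    Real.one_le_exp (mul_nonneg hr0.le (hgnn x))
  have hEpos : ∀ x, 0 < E x := fun x => Real.exp_pos _
  have h1r : 1/r ≤ 1 := by rw [div_le_one hr0]; exact hr
  have h1rpos : 0 < 1/r := by positivity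
  -- John--Nirenberg in the form needed for the layer cake lemma
  have hJN' : ∀ t : ℝ, 0 < t →
      (volume.restrict Q) {x | t < g x}
        ≤ ENNReal.ofReal (2 * Real.exp (-(2*r*t))) * (volume.restrict Q) Set.univ := by
    intro t ht
    rw [Measure.restrict_apply (measurableSet_lt measurable_const hg),
      Measure.restrict_apply_univ]
    have hset : {x | t < g x} ∩ Q = {x ∈ Q | |Real.log (w x) - cQ| > t} := by
      ext x
      simp only [Set.mem_inter_iff, Set.mem_setOf_eq, gt_iff_lt]
      tauto
    rw [hset]
    have h := hJN Q ⟨c, ρ, hρ, hQeq⟩ t ht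
    rwa [hexpC t] at h
  have htail : ∫⁻ x in Q, ENNReal.ofReal (E x) ≤ 3 * volume Q := by
    have h := tailL (volume.restrict Q) hg hr0 hJN'
    rwa [Measure.restrict_apply_univ] at h
  -- integrability of E
  have hEint : IntegrableOn E Q := by
    refine ⟨hEmeas.aestronglyMeasurable, ?_⟩
    rw [hasFiniteIntegral_iff_ofReal (Filter.Eventually.of_forall fun x => (hEpos x).le)]
    exact lt_of_le_of_lt htail
      (ENNReal.mul_lt_top (by norm_num) hQfin.lt_top)
  set IE := ∫ x in Q, E x with hIEdef
  have hIEnn : 0 ≤ IE := integral_nonneg fun x => (hEpos x).le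
  have hIE3 : IE ≤ 3 * V := by
    have heq : ENNReal.ofReal IE = ∫⁻ x in Q, ENNReal.ofReal (E x) :=
      ofReal_integral_eq_lintegral_ofReal hEint
        (Filter.Eventually.of_forall fun x => (hEpos x).le)
    have hle : ENNReal.ofReal IE ≤ ENNReal.ofReal (3 * V) := by
      rw [heq]
      refine le_trans htail ?_
      rw [hVQ, ENNReal.ofReal_mul (by norm_num : (0:ℝ) ≤ 3)]
      gcongr
      · simp
    exact (ENNReal.ofReal_le_ofReal_iff (by positivity)).mp hle
  set M := V⁻¹ * IE with hMdef
  have hM0 : 0 ≤ M := mul_nonneg (by positivity) hIEnn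
  have hM3 : M ≤ 3 := by
    have := mul_le_mul_of_nonneg_left hIE3 (inv_nonneg.mpr hV.le)
    rw [hMdef]
    calc V⁻¹ * IE ≤ V⁻¹ * (3 * V) := this
      _ = 3 := by field_simp
  -- pointwise inequalities
  have hEg : ∀ x, (E x) ^ (1/r) = Real.exp (g x) := by
    intro x
    have : r * g x * (1/r) = g x := by field_simp
    rw [hEdef]
    simp only
    rw [exp_rpow', this]
  have hw_le : ∀ x, w x ≤ Real.exp cQ * (E x) ^ (1/r) := by
    intro x
    rw [hEg x, ← Real.exp_add]
    have hgx : Real.log (w x) - cQ ≤ g x := le_abs_self _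
    calc w x = Real.exp (Real.log (w x)) := (Real.exp_log (hw x)).symm
      _ ≤ Real.exp (cQ + g x) := Real.exp_le_exp.mpr (by linarith)
  have hwr_le : ∀ x, w x ^ (-r) ≤ Real.exp (-(r * cQ)) * E x := by
    intro x
    rw [Real.rpow_def_of_pos (hw x), hEdef]
    simp only
    rw [← Real.exp_add]
    apply Real.exp_le_exp.mpr
    have hgx : -(Real.log (w x) - cQ) ≤ g x := neg_le_abs _
    have := mul_le_mul_of_nonneg_left hgx hr0.le
    nlinarith
  have hEr_le : ∀ x, (E x) ^ (1/r) ≤ E x := by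
    intro x
    calc (E x) ^ (1/r) ≤ (E x) ^ (1:ℝ) := Real.rpow_le_rpow_of_exponent_le (hE1 x) h1r
      _ = E x := Real.rpow_one _
  -- integrability
  have hE1meas : Measurable fun x => (E x) ^ (1/r) := by
    have heq : (fun x => (E x) ^ (1/r)) = fun x => Real.exp (Real.log (E x) * (1/r)) :=
      funext fun x => Real.rpow_def_of_pos (hEpos x) _
    rw [heq]
    exact ((Real.measurable_log.comp hEmeas).mul_const _).exp
  have hE1int : IntegrableOn (fun x => (E x) ^ (1/r)) Q := by
    refine Integrable.mono' hEint hE1meas.aestronglyMeasurable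
      (Filter.Eventually.of_forall fun x => ?_)
    rw [Real.norm_eq_abs, abs_of_nonneg (Real.rpow_nonneg (hEpos x).le _)]
    exact hEr_le x
  have hwint : IntegrableOn w Q := by
    refine Integrable.mono' (hEint.const_mul (Real.exp cQ)) hmeas.aestronglyMeasurable
      (Filter.Eventually.of_forall fun x => ?_)
    rw [Real.norm_eq_abs, abs_of_pos (hw x)]
    calc w x ≤ Real.exp cQ * (E x) ^ (1/r) := hw_le x
      _ ≤ Real.exp cQ * E x :=
        mul_le_mul_of_nonneg_left (hEr_le x) (Real.exp_pos _).le
  have hwrmeas : Measurable fun x => w x ^ (-r) := by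
    have heq : (fun x => w x ^ (-r)) = fun x => Real.exp (Real.log (w x) * (-r)) :=
      funext fun x => Real.rpow_def_of_pos (hw x) _
    rw [heq]
    exact ((Real.measurable_log.comp hmeas).mul_const _).exp
  have hwrint : IntegrableOn (fun x => w x ^ (-r)) Q := by
    refine Integrable.mono' (hEint.const_mul (Real.exp (-(r*cQ)))) hwrmeas.aestronglyMeasurable
      (Filter.Eventually.of_forall fun x => ?_)
    rw [Real.norm_eq_abs, abs_of_nonneg (Real.rpow_nonneg (hw x).le _)]
    exact hwr_le x
  -- Jensen step
  set A1 := ∫ x in Q, (E x) ^ (1/r) with hA1def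
  have hA1nn : 0 ≤ A1 := integral_nonneg fun x => Real.rpow_nonneg (hEpos x).le _
  have hjen : A1 ≤ IE ^ (1/r) * V ^ (1 - 1/r) := by
    have hle := jensenL (volume.restrict Q)
      ((hEmeas.ennreal_ofReal).aemeasurable) hr
    rw [Measure.restrict_apply_univ] at hle
    have hL : (∫⁻ x in Q, (ENNReal.ofReal (E x)) ^ (1/r)) = ENNReal.ofReal A1 := by
      rw [hA1def, ofReal_integral_eq_lintegral_ofReal hE1int
        (Filter.Eventually.of_forall fun x => Real.rpow_nonneg (hEpos x).le _)]
      refine lintegral_congr fun x => ?_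
      rw [← ENNReal.ofReal_rpow_of_pos (hEpos x)]
    have hR : (∫⁻ x in Q, ENNReal.ofReal (E x)) = ENNReal.ofReal IE :=
      (ofReal_integral_eq_lintegral_ofReal hEint
        (Filter.Eventually.of_forall fun x => (hEpos x).le)).symm
    rw [hL, hR, hVQ] at hle
    rw [ENNReal.ofReal_rpow_of_nonneg hIEnn (by positivity),
      ENNReal.ofReal_rpow_of_nonneg hV.le (by linarith),
      ← ENNReal.ofReal_mul (by positivity)] at hle
    exact (ENNReal.ofReal_le_ofReal_iff (by positivity)).mp hle
  -- bounds on the averages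
  have havgw : avgOn Q w ≤ Real.exp cQ * M ^ (1/r) := by
    have h1 : ∫ x in Q, w x ≤ Real.exp cQ * A1 := by
      calc ∫ x in Q, w x ≤ ∫ x in Q, Real.exp cQ * (E x) ^ (1/r) :=
            integral_mono hwint (hE1int.const_mul _) hw_le
        _ = Real.exp cQ * A1 := by rw [hA1def, MeasureTheory.integral_const_mul]
    have hVsplit : V ^ (1 - 1/r) = V * (V ^ (1/r))⁻¹ := by
      rw [show (1 - 1/r) = 1 + (-(1/r)) by ring, Real.rpow_add hV, Real.rpow_one,
        Real.rpow_neg hV.le]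
    have hVinv : (V⁻¹) ^ (1/r) = (V ^ (1/r))⁻¹ := Real.inv_rpow hV.le _
    have hVr : (0:ℝ) < V ^ (1/r) := Real.rpow_pos_of_pos hV _
    rw [avgOn, ← hVdef]
    calc V⁻¹ * ∫ x in Q, w x ≤ V⁻¹ * (Real.exp cQ * A1) :=
          mul_le_mul_of_nonneg_left h1 (by positivity)
      _ ≤ V⁻¹ * (Real.exp cQ * (IE ^ (1/r) * V ^ (1 - 1/r))) := by
          refine mul_le_mul_of_nonneg_left ?_ (by positivity)
          exact mul_le_mul_of_nonneg_left hjen (Real.exp_pos _).le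
      _ = Real.exp cQ * M ^ (1/r) := by
          rw [hMdef, Real.mul_rpow (by positivity) hIEnn, hVinv, hVsplit]
          field_simp
  have havgwr : avgOn Q (fun x => w x ^ (-r)) ≤ Real.exp (-(r*cQ)) * M := by
    have h1 : ∫ x in Q, w x ^ (-r) ≤ Real.exp (-(r*cQ)) * IE := by
      calc ∫ x in Q, w x ^ (-r) ≤ ∫ x in Q, Real.exp (-(r*cQ)) * E x :=
            integral_mono hwrint (hEint.const_mul _) hwr_le
        _ = Real.exp (-(r*cQ)) * IE := by rw [hIEdef, MeasureTheory.integral_const_mul]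
    rw [avgOn, ← hVdef]
    calc V⁻¹ * ∫ x in Q, w x ^ (-r) ≤ V⁻¹ * (Real.exp (-(r*cQ)) * IE) :=
          mul_le_mul_of_nonneg_left h1 (by positivity)
      _ = Real.exp (-(r*cQ)) * M := by rw [hMdef]; ring
  have havgwrnn : 0 ≤ avgOn Q (fun x => w x ^ (-r)) := by
    rw [avgOn, ← hVdef]
    exact mul_nonneg (by positivity)
      (integral_nonneg fun x => Real.rpow_nonneg (hw x).le _)
  -- final assembly
  have hp1 : p - 1 = 1/r := by rw [hpdef]; ring
  have hpne : p ≠ 1 := by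
    intro h
    rw [hpdef] at h
    have : (1:ℝ)/r = 0 := by linarith
    linarith
  have hexpo : -(p-1)⁻¹ = -r := by rw [hp1, one_div, inv_inv]
  rw [apRatio, if_neg hpne]
  simp only [hexpo]
  rw [hp1]
  have hb : (avgOn Q (fun x => w x ^ (-r))) ^ (1/r) ≤ Real.exp (-cQ) * M ^ (1/r) := by
    calc (avgOn Q (fun x => w x ^ (-r))) ^ (1/r)
        ≤ (Real.exp (-(r*cQ)) * M) ^ (1/r) :=
          Real.rpow_le_rpow havgwrnn havgwr (by positivity)
      _ = Real.exp (-cQ) * M ^ (1/r) := by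
          rw [Real.mul_rpow (Real.exp_pos _).le hM0, exp_rpow',
            show -(r*cQ) * (1/r) = -cQ by field_simp]
  have hMle : M ^ (1/r) ≤ (3:ℝ) ^ (1/r) := Real.rpow_le_rpow hM0 hM3 (by positivity)
  have hMnn : 0 ≤ M ^ (1/r) := Real.rpow_nonneg hM0 _
  have havgwnn : 0 ≤ avgOn Q w := by
    rw [avgOn, ← hVdef]
    exact mul_nonneg (by positivity) (integral_nonneg fun x => (hw x).le)
  calc avgOn Q w * (avgOn Q (fun x => w x ^ (-r))) ^ (1/r)
      ≤ (Real.exp cQ * M ^ (1/r)) * (Real.exp (-cQ) * M ^ (1/r)) :=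
        mul_le_mul havgw hb (Real.rpow_nonneg havgwrnn _) (by positivity)
    _ = (Real.exp cQ * Real.exp (-cQ)) * (M ^ (1/r) * M ^ (1/r)) := by ring
    _ = M ^ (1/r) * M ^ (1/r) := by
        rw [← Real.exp_add, add_neg_cancel, Real.exp_zero, one_mul]
    _ ≤ (3:ℝ) ^ (1/r) * (3:ℝ) ^ (1/r) := mul_le_mul hMle hMle hMnn (by positivity)
    _ = (3:ℝ) ^ (2 * (1/r)) := by
        rw [← Real.rpow_add (by norm_num : (0:ℝ) < 3)]
        congr 1
        ring
end
end
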